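/- Let f : ℝ^(m×n) → ℝ be convex differentiable, k ≥ 2, L_k and L₂ as above with d = min_i d_i. If L₂ has a spurious local minimum (a local minimum that is not global), then L_k also has a spurious local minimum. -/

import Mathlib

attribute [local instance] Matrix.frobeniusNormedAddCommGroup Matrix.frobeniusNormedSpace

/-- Product `M (b-1) * ⋯ * M a` of a chain of matrices (identity when `b = a`,
junk value `0` when `b < a`). -/
def chainProd (d : ℕ → ℕ) (M : ∀ i : ℕ, Matrix (Fin (d (i + 1))) (Fin (d i)) ℝ)
    (a : ℕ) : (b : ℕ) → Matrix (Fin (d b)) (Fin (d a)) ℝ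
  | 0 => if h : 0 = a then by rw [← h]; exact 1 else 0
  | (b + 1) => if h : b + 1 = a then by rw [← h]; exact 1
      else M b * chainProd d M a b

/-- Extend a `Fin k`-indexed tuple of layer matrices to an `ℕ`-indexed one (by `0`). -/
def ext (d : ℕ → ℕ) (k : ℕ)
    (N : ∀ i : Fin k, Matrix (Fin (d (i.1 + 1))) (Fin (d i.1)) ℝ) :
    ∀ i : ℕ, Matrix (Fin (d (i + 1))) (Fin (d i)) ℝ :=
  fun i => if h : i < k then N ⟨i, h⟩ else 0

/-!
Let `(A, B)` be a spurious local minimum of `L₂`, with inner width `e = min_i d_i` attained at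
layer `t`. Pad `A` and `B` with rectangular identities into layers whose product is `A * B`.
If `0 < t < k`, splitting the chain at layer `t` writes the deep product as a product of two
matrices depending continuously on the layers and equal to `A` and `B` at the padded point, so
the local minimum pulls back. If `t = 0` then `B` is square; if it were singular, a left null
vector `v` of `B` would let `A` move along `u vᵀ` without changing `A * B`, and the first-order
conditions along these moves force `∇f(A * B) = 0`, which for convex `f` contradicts
spuriousness. Hence `B` is invertible and `P ↦ (P * B⁻¹, B)` pulls the minimum back. The case
`t = k` is symmetric.
-/

open Filter Topology
open scoped Matrix

theorem IsLocalMin.eventually_isLocalMin {X : Type*} [TopologicalSpace X] {g : X → ℝ} {p : X}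
    (h : IsLocalMin g p) : ∀ᶠ q in 𝓝 p, g q = g p → IsLocalMin g q :=
  h.eventually_nhds.mono fun q hq heq => by rwa [IsLocalMin, IsMinFilter, heq]

theorem IsLocalMin.fderiv_apply_eq_zero {E : Type*} [NormedAddCommGroup E] [NormedSpace ℝ E]
    {g : E → ℝ} {x v : E} (h : IsLocalMin (fun s : ℝ => g (x + s • v)) 0)
    (hg : DifferentiableAt ℝ g x) : fderiv ℝ g x v = 0 := by
  have hline : HasDerivAt (fun s : ℝ => x + s • v) v 0 := by
    simpa using ((hasDerivAt_id (0 : ℝ)).smul_const v).const_add x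
  refine h.hasDerivAt_eq_zero (HasFDerivAt.comp_hasDerivAt (l := g) 0 ?_ hline)
  simpa using hg.hasFDerivAt

theorem ConvexOn.isMinOn_of_hasFDerivAt_eq_zero {E : Type*} [NormedAddCommGroup E]
    [NormedSpace ℝ E] {g : E → ℝ} {x : E} (hconv : ConvexOn ℝ Set.univ g)
    (hg : HasFDerivAt g (0 : E →L[ℝ] ℝ) x) : IsMinOn g Set.univ x := by
  intro y _
  have hφ : HasDerivAt (g ∘ AffineMap.lineMap (k := ℝ) x y) 0 0 := by
    simpa using (AffineMap.lineMap_apply_zero (k := ℝ) x y ▸ hg).comp_hasDerivAt (0 : ℝ)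
      (AffineMap.hasDerivAt_lineMap (a := x) (b := y) (x := 0))
  have := (hconv.comp_affineMap (AffineMap.lineMap x y)).le_slope_of_hasDerivAt
    (Set.mem_univ 0) (Set.mem_univ 1) zero_lt_one hφ
  simpa [slope_def_field] using this

section Bilinear

variable {E F G : Type*} [AddCommGroup E] [Module ℝ E] [TopologicalSpace E]
  [AddCommGroup F] [Module ℝ F] [TopologicalSpace F] [NormedAddCommGroup G] [NormedSpace ℝ G]
  {f : G → ℝ} {μ : E →ₗ[ℝ] F →ₗ[ℝ] G} {x : E} {y : F}

theorem IsLocalMin.flip_bilin (h : IsLocalMin (fun q : E × F => f (μ q.1 q.2)) (x, y)) :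
    IsLocalMin (fun q : F × E => f (μ.flip q.1 q.2)) (y, x) :=
  IsLocalMin.comp_continuous (f := fun q : E × F => f (μ q.1 q.2)) (g := Prod.swap) (b := (y, x))
    h continuous_swap.continuousAt

variable [IsTopologicalAddGroup F] [ContinuousSMul ℝ F]

theorem IsLocalMin.fderiv_bilin_right_eq_zero
    (h : IsLocalMin (fun q : E × F => f (μ q.1 q.2)) (x, y))
    (hf : DifferentiableAt ℝ f (μ x y)) (v : F) : fderiv ℝ f (μ x y) (μ x v) = 0 := by
  have hline : IsLocalMin (fun s : ℝ => f (μ x (y + s • v))) 0 :=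
    IsLocalMin.comp_continuous (f := fun q : E × F => f (μ q.1 q.2))
      (g := fun s : ℝ => (x, y + s • v)) (by simpa using h) (by fun_prop)
  simp only [map_add, map_smul] at hline
  exact hline.fderiv_apply_eq_zero hf

variable [IsTopologicalAddGroup E] [ContinuousSMul ℝ E]

/-- Moving `x` along `w` with `μ w y = 0` stays among local minima with the same value, and the
first-order condition at `(x + s • w, y)` for small `s ≠ 0` yields the claim. -/
theorem IsLocalMin.fderiv_bilin_eq_zero_of_bilin_left_eq_zero
    (h : IsLocalMin (fun q : E × F => f (μ q.1 q.2)) (x, y))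
    (hf : DifferentiableAt ℝ f (μ x y)) {w : E} (hw : μ w y = 0) (v : F) :
    fderiv ℝ f (μ x y) (μ w v) = 0 := by
  have hsame : ∀ s : ℝ, μ (x + s • w) y = μ x y := by simp [hw]
  have hline : Tendsto (fun s : ℝ => (x + s • w, y)) (𝓝[≠] 0) (𝓝 (x, y)) :=
    ((by fun_prop : Continuous fun s : ℝ => (x + s • w, y)).tendsto' 0 (x, y)
      (by simp)).mono_left nhdsWithin_le_nhds
  obtain ⟨s, hmin, hs⟩ := ((hline.eventually h.eventually_isLocalMin).and
    self_mem_nhdsWithin).exists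
  have := (hmin (by simp only [hsame])).fderiv_bilin_right_eq_zero ((hsame s).symm ▸ hf) v
  rw [hsame, map_add, map_smul, LinearMap.add_apply, LinearMap.smul_apply, map_add, map_smul,
    h.fderiv_bilin_right_eq_zero hf v, zero_add, smul_eq_mul] at this
  exact (mul_eq_zero.mp this).resolve_left hs

theorem IsLocalMin.fderiv_bilin_eq_zero_of_bilin_right_eq_zero
    (h : IsLocalMin (fun q : E × F => f (μ q.1 q.2)) (x, y))
    (hf : DifferentiableAt ℝ f (μ x y)) {v : F} (hv : μ x v = 0) (w : E) :
    fderiv ℝ f (μ x y) (μ w v) = 0 :=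
  h.flip_bilin.fderiv_bilin_eq_zero_of_bilin_left_eq_zero hf hv w

end Bilinear

namespace Matrix

variable {R m n : Type*} [Semiring R] [Fintype m]

theorem eq_sum_vecMulVec_single [DecidableEq m] (Y : Matrix m n R) :
    Y = ∑ i, vecMulVec (Pi.single i 1) (Y i) := by
  ext r j
  simp [sum_apply, vecMulVec_apply, Pi.single_apply]

theorem map_eq_zero_of_map_vecMulVec_eq_zero {M F : Type*} [AddCommMonoid M]
    [FunLike F (Matrix m n R) M] [AddMonoidHomClass F (Matrix m n R) M] (g : F)
    (h : ∀ u v, g (vecMulVec u v) = 0) (Y : Matrix m n R) : g Y = 0 := by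
  classical
  rw [Y.eq_sum_vecMulVec_single, map_sum]
  exact Finset.sum_eq_zero fun i _ => h _ _

end Matrix

section TwoLayer

open Matrix

variable {l m n : Type*} [Fintype m] {f : Matrix l n ℝ → ℝ} {X : Type*} [TopologicalSpace X]
  {P : X → Matrix l n ℝ} {x : X}

theorem isLocalMin_of_factorization {ψ : X → Matrix l m ℝ × Matrix m n ℝ}
    (h : IsLocalMin (fun q : Matrix l m ℝ × Matrix m n ℝ => f (q.1 * q.2)) (ψ x))
    (hψ : ContinuousAt ψ x) (hP : ∀ y, P y = (ψ y).1 * (ψ y).2) :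
    IsLocalMin (fun y => f (P y)) x := by
  simpa only [Function.comp_def, ← hP] using h.comp_continuous hψ

theorem isLocalMin_of_isUnit_det_right [Fintype n] [DecidableEq n] {A : Matrix l n ℝ}
    {B : Matrix n n ℝ}
    (h : IsLocalMin (fun q : Matrix l n ℝ × Matrix n n ℝ => f (q.1 * q.2)) (A, B))
    (hB : IsUnit B.det) (hP : ContinuousAt P x) (hPx : P x = A * B) :
    IsLocalMin (fun y => f (P y)) x :=
  isLocalMin_of_factorization (ψ := fun y => (P y * B⁻¹, B))
    (by simpa [hPx, mul_nonsing_inv_cancel_right _ _ hB] using h)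
    (((continuous_id.matrix_mul continuous_const).continuousAt.comp hP).prodMk
      continuousAt_const)
    (fun y => (nonsing_inv_mul_cancel_right _ _ hB).symm)

theorem isLocalMin_of_isUnit_det_left [Fintype l] [DecidableEq l] {A : Matrix l l ℝ}
    {B : Matrix l n ℝ}
    (h : IsLocalMin (fun q : Matrix l l ℝ × Matrix l n ℝ => f (q.1 * q.2)) (A, B))
    (hA : IsUnit A.det) (hP : ContinuousAt P x) (hPx : P x = A * B) :
    IsLocalMin (fun y => f (P y)) x :=
  isLocalMin_of_factorization (ψ := fun y => (A, A⁻¹ * P y))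
    (by simpa [hPx, nonsing_inv_mul_cancel_left _ _ hA] using h)
    (continuousAt_const.prodMk
      ((continuous_const.matrix_mul continuous_id).continuousAt.comp hP))
    (fun y => (mul_nonsing_inv_cancel_left _ _ hA).symm)

variable [Fintype l] [Fintype n]

theorem IsLocalMin.fderiv_mul_eq_zero_of_mul_right_eq_zero {A W : Matrix l m ℝ}
    {B : Matrix m n ℝ}
    (h : IsLocalMin (fun q : Matrix l m ℝ × Matrix m n ℝ => f (q.1 * q.2)) (A, B))
    (hf : DifferentiableAt ℝ f (A * B)) (hW : W * B = 0) (H : Matrix m n ℝ) :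
    fderiv ℝ f (A * B) (W * H) = 0 :=
  h.fderiv_bilin_eq_zero_of_bilin_left_eq_zero (f := f) (μ := mulLinearMap ℝ) (x := A) (y := B)
    hf hW H

theorem IsLocalMin.fderiv_mul_eq_zero_of_mul_left_eq_zero {A : Matrix l m ℝ}
    {B V : Matrix m n ℝ}
    (h : IsLocalMin (fun q : Matrix l m ℝ × Matrix m n ℝ => f (q.1 * q.2)) (A, B))
    (hf : DifferentiableAt ℝ f (A * B)) (hV : A * V = 0) (H : Matrix l m ℝ) :
    fderiv ℝ f (A * B) (H * V) = 0 :=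
  h.fderiv_bilin_eq_zero_of_bilin_right_eq_zero (f := f) (μ := mulLinearMap ℝ) (x := A) (y := B)
    hf hV H

theorem IsLocalMin.fderiv_mul_eq_zero_of_vecMul_eq_zero {A : Matrix l m ℝ} {B : Matrix m n ℝ}
    (h : IsLocalMin (fun q : Matrix l m ℝ × Matrix m n ℝ => f (q.1 * q.2)) (A, B))
    (hf : DifferentiableAt ℝ f (A * B)) {v : m → ℝ} (hv : v ≠ 0) (hvB : v ᵥ* B = 0) :
    fderiv ℝ f (A * B) = 0 := by
  have hvv : v ⬝ᵥ ((v ⬝ᵥ v)⁻¹ • v) = 1 := by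
    rw [dotProduct_smul, smul_eq_mul, inv_mul_cancel₀ (dotProduct_self_eq_zero.not.mpr hv)]
  refine ContinuousLinearMap.ext fun Y => map_eq_zero_of_map_vecMulVec_eq_zero _ (fun u c => ?_) Y
  have hW : vecMulVec u v * B = 0 := by
    ext
    simp [vecMulVec_mul, hvB, vecMulVec_apply]
  have := h.fderiv_mul_eq_zero_of_mul_right_eq_zero hf hW (vecMulVec ((v ⬝ᵥ v)⁻¹ • v) c)
  rwa [vecMulVec_mul_vecMulVec, hvv, one_smul] at this

theorem IsLocalMin.fderiv_mul_eq_zero_of_mulVec_eq_zero {A : Matrix l m ℝ} {B : Matrix m n ℝ}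
    (h : IsLocalMin (fun q : Matrix l m ℝ × Matrix m n ℝ => f (q.1 * q.2)) (A, B))
    (hf : DifferentiableAt ℝ f (A * B)) {v : m → ℝ} (hv : v ≠ 0) (hAv : A *ᵥ v = 0) :
    fderiv ℝ f (A * B) = 0 := by
  have hvv : ((v ⬝ᵥ v)⁻¹ • v) ⬝ᵥ v = 1 := by
    rw [smul_dotProduct, smul_eq_mul, inv_mul_cancel₀ (dotProduct_self_eq_zero.not.mpr hv)]
  refine ContinuousLinearMap.ext fun Y => map_eq_zero_of_map_vecMulVec_eq_zero _ (fun u c => ?_) Y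
  have hV : A * vecMulVec v c = 0 := by simp [mul_vecMulVec, hAv]
  have := h.fderiv_mul_eq_zero_of_mul_left_eq_zero hf hV (vecMulVec u ((v ⬝ᵥ v)⁻¹ • v))
  rwa [vecMulVec_mul_vecMulVec, hvv, one_smul] at this

theorem IsLocalMin.isUnit_det_right_of_lt [DecidableEq n] {A : Matrix l n ℝ} {B : Matrix n n ℝ}
    {C : Matrix l n ℝ} (hconv : ConvexOn ℝ Set.univ f) (hf : DifferentiableAt ℝ f (A * B))
    (h : IsLocalMin (fun q : Matrix l n ℝ × Matrix n n ℝ => f (q.1 * q.2)) (A, B))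
    (hlt : f C < f (A * B)) : IsUnit B.det := by
  refine isUnit_iff_ne_zero.mpr fun hdet => ?_
  obtain ⟨v, hv, hvB⟩ := exists_vecMul_eq_zero_iff.mpr hdet
  have hmin := hconv.isMinOn_of_hasFDerivAt_eq_zero
    (h.fderiv_mul_eq_zero_of_vecMul_eq_zero hf hv hvB ▸ hf.hasFDerivAt)
  exact (hmin (Set.mem_univ C)).not_gt hlt

theorem IsLocalMin.isUnit_det_left_of_lt [DecidableEq l] {A : Matrix l l ℝ} {B : Matrix l n ℝ}
    {C : Matrix l n ℝ} (hconv : ConvexOn ℝ Set.univ f) (hf : DifferentiableAt ℝ f (A * B))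
    (h : IsLocalMin (fun q : Matrix l l ℝ × Matrix l n ℝ => f (q.1 * q.2)) (A, B))
    (hlt : f C < f (A * B)) : IsUnit A.det := by
  refine isUnit_iff_ne_zero.mpr fun hdet => ?_
  obtain ⟨v, hv, hAv⟩ := exists_mulVec_eq_zero_iff.mpr hdet
  have hmin := hconv.isMinOn_of_hasFDerivAt_eq_zero
    (h.fderiv_mul_eq_zero_of_mulVec_eq_zero hf hv hAv ▸ hf.hasFDerivAt)
  exact (hmin (Set.mem_univ C)).not_gt hlt

end TwoLayer

section ChainProd

variable (d : ℕ → ℕ)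

theorem chainProd_self (M : ∀ i : ℕ, Matrix (Fin (d (i + 1))) (Fin (d i)) ℝ) (a : ℕ) :
    chainProd d M a a = 1 := by
  cases a <;> simp [chainProd]

theorem chainProd_succ (M : ∀ i : ℕ, Matrix (Fin (d (i + 1))) (Fin (d i)) ℝ) {a b : ℕ}
    (h : b + 1 ≠ a) : chainProd d M a (b + 1) = M b * chainProd d M a b := by
  simp [chainProd, h]

theorem chainProd_mul (M : ∀ i : ℕ, Matrix (Fin (d (i + 1))) (Fin (d i)) ℝ) {a b c : ℕ}
    (hab : a ≤ b) (hbc : b ≤ c) :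
    chainProd d M b c * chainProd d M a b = chainProd d M a c := by
  induction c, hbc using Nat.le_induction with
  | base => rw [chainProd_self, Matrix.one_mul]
  | succ c hbc ih =>
    rw [chainProd_succ d M (by omega), chainProd_succ d M (by omega), Matrix.mul_assoc, ih]

theorem continuous_chainProd (k a b : ℕ) :
    Continuous fun N : ∀ i : Fin k, Matrix (Fin (d (i.1 + 1))) (Fin (d i.1)) ℝ =>
      chainProd d (ext d k N) a b := by
  induction b with
  | zero => by_cases h : 0 = a <;> simp only [chainProd, h] <;> exact continuous_const
  | succ b ih =>
    by_cases h : b + 1 = a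
    · simp only [chainProd, h]
      exact continuous_const
    · simp only [chainProd_succ d _ h]
      refine Continuous.matrix_mul ?_ ih
      by_cases hb : b < k
      · simp only [ext, dif_pos hb]
        fun_prop
      · simp only [ext, dif_neg hb]
        fun_prop

end ChainProd

section Padding

def rectOne (b a : ℕ) : Matrix (Fin b) (Fin a) ℝ :=
  Matrix.of fun r c => if (r : ℕ) = c then 1 else 0

theorem rectOne_self (a : ℕ) : rectOne a a = 1 := by
  ext r s
  simp [rectOne, Matrix.one_apply, Fin.ext_iff]

theorem rectOne_mul_rectOne_of_le {a b : ℕ} (h : a ≤ b) : rectOne a b * rectOne b a = 1 := by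
  ext r s
  simp only [rectOne, Matrix.mul_apply, Matrix.of_apply, ite_mul, one_mul, zero_mul]
  rw [Fin.sum_univ_eq_sum_range
      (fun j => if (r : ℕ) = j then if j = (s : ℕ) then (1 : ℝ) else 0 else 0),
    Finset.sum_ite_eq, if_pos (Finset.mem_range.mpr (r.2.trans_le h))]
  simp [Matrix.one_apply, Fin.ext_iff]

variable (d : ℕ → ℕ) (k : ℕ) {e : ℕ}

/- Layer `i` of the padded network is `padLeft (i + 1) * padRight i`; since
`padRight i * padLeft i = 1` for `0 < i < k`, the chain telescopes. The factor
`rectOne (d j) (d k)` only transports `A` along `j = k`. -/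
def padLeft (A : Matrix (Fin (d k)) (Fin e) ℝ) (j : ℕ) : Matrix (Fin (d j)) (Fin e) ℝ :=
  if j = k then rectOne (d j) (d k) * A else rectOne (d j) e

def padRight (B : Matrix (Fin e) (Fin (d 0)) ℝ) (i : ℕ) : Matrix (Fin e) (Fin (d i)) ℝ :=
  if i = 0 then B * rectOne (d 0) (d i) else rectOne e (d i)

def padLayers (A : Matrix (Fin (d k)) (Fin e) ℝ) (B : Matrix (Fin e) (Fin (d 0)) ℝ) :
    ∀ i : Fin k, Matrix (Fin (d (i.1 + 1))) (Fin (d i.1)) ℝ :=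
  fun i => padLeft d k A (i.1 + 1) * padRight d B i.1

variable {d k} (A : Matrix (Fin (d k)) (Fin e) ℝ) (B : Matrix (Fin e) (Fin (d 0)) ℝ)

theorem padLeft_self : padLeft d k A k = A := by
  simp [padLeft, rectOne_self]

theorem padRight_zero : padRight d B 0 = B := by
  simp [padRight, rectOne_self]

theorem padLeft_of_ne {j : ℕ} (hj : j ≠ k) : padLeft d k A j = rectOne (d j) e := by
  simp [padLeft, hj]

theorem padRight_of_ne {i : ℕ} (hi : i ≠ 0) : padRight d B i = rectOne e (d i) := by
  simp [padRight, hi]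

theorem padRight_mul_padLeft {i : ℕ} (hi0 : i ≠ 0) (hik : i ≠ k) (he : e ≤ d i) :
    padRight d B i * padLeft d k A i = 1 := by
  rw [padRight_of_ne B hi0, padLeft_of_ne A hik, rectOne_mul_rectOne_of_le he]

theorem chainProd_padLayers (he : ∀ i ≤ k, e ≤ d i) {a b : ℕ} (hab : a < b)
    (hbk : b ≤ k) :
    chainProd d (ext d k (padLayers d k A B)) a b = padLeft d k A b * padRight d B a := by
  induction b, hab using Nat.le_induction with
  | base =>
    rw [chainProd_succ d _ (by omega), chainProd_self, Matrix.mul_one]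
    simp only [ext, show a < k by omega, dif_pos, padLayers]
  | succ b hab ih =>
    rw [chainProd_succ d _ (by omega), ih (by omega)]
    simp only [ext, show b < k by omega, dif_pos, padLayers]
    rw [Matrix.mul_assoc, ← Matrix.mul_assoc (padRight d B b),
      padRight_mul_padLeft A B (by omega) (by omega) (he b (by omega)), Matrix.one_mul]

theorem chainProd_padLayers_zero (he : ∀ i ≤ k, e ≤ d i) (hk : 0 < k) :
    chainProd d (ext d k (padLayers d k A B)) 0 k = A * B := by
  rw [chainProd_padLayers A B he hk le_rfl, padLeft_self, padRight_zero]

end Padding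

/-- if the two-layer network `L₂` has a spurious local minimum, so
does the deep network `L_k`. -/
theorem stmt_12 (d : ℕ → ℕ) (k : ℕ) (hk : 2 ≤ k)
    (f : Matrix (Fin (d k)) (Fin (d 0)) ℝ → ℝ)
    (hconv : ConvexOn ℝ Set.univ f) (hdiff : Differentiable ℝ f)
    (e : ℕ) (he1 : ∃ i ≤ k, d i = e) (he2 : ∀ i ≤ k, e ≤ d i)
    (h2 : ∃ p : Matrix (Fin (d k)) (Fin e) ℝ × Matrix (Fin e) (Fin (d 0)) ℝ,
      IsLocalMin (fun q : Matrix (Fin (d k)) (Fin e) ℝ × Matrix (Fin e) (Fin (d 0)) ℝ =>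
        f (q.1 * q.2)) p ∧
      ∃ q : Matrix (Fin (d k)) (Fin e) ℝ × Matrix (Fin e) (Fin (d 0)) ℝ,
        f (q.1 * q.2) < f (p.1 * p.2)) :
    ∃ M : ∀ i : Fin k, Matrix (Fin (d (i.1 + 1))) (Fin (d i.1)) ℝ,
      IsLocalMin (fun N => f (chainProd d (ext d k N) 0 k)) M ∧
      ∃ N : ∀ i : Fin k, Matrix (Fin (d (i.1 + 1))) (Fin (d i.1)) ℝ,
        f (chainProd d (ext d k N) 0 k) < f (chainProd d (ext d k M) 0 k) := by
  obtain ⟨⟨A, B⟩, hmin, ⟨A', B'⟩, hlt⟩ := h2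
  have hk0 : 0 < k := by omega
  have hprod := chainProd_padLayers_zero A B he2 hk0
  refine ⟨padLayers d k A B, ?_, padLayers d k A' B', ?_⟩
  swap
  · rwa [hprod, chainProd_padLayers_zero A' B' he2 hk0]
  obtain ⟨t, htk, rfl⟩ := he1
  have hcont := continuous_chainProd d k
  rcases Nat.eq_zero_or_pos t with rfl | ht0
  · exact isLocalMin_of_isUnit_det_right hmin (hmin.isUnit_det_right_of_lt hconv (hdiff _) hlt)
      (hcont 0 k).continuousAt hprod
  rcases htk.lt_or_eq with htk | rfl
  · have hA : chainProd d (ext d k (padLayers d k A B)) t k = A := by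
      rw [chainProd_padLayers A B he2 htk le_rfl, padLeft_self, padRight_of_ne B ht0.ne',
        rectOne_self, Matrix.mul_one]
    have hB : chainProd d (ext d k (padLayers d k A B)) 0 t = B := by
      rw [chainProd_padLayers A B he2 ht0 htk.le, padRight_zero, padLeft_of_ne A htk.ne,
        rectOne_self, Matrix.one_mul]
    exact isLocalMin_of_factorization
      (ψ := fun N => (chainProd d (ext d k N) t k, chainProd d (ext d k N) 0 t))
      (by rwa [hA, hB]) ((hcont t k).prodMk (hcont 0 t)).continuousAt
      (fun N => (chainProd_mul d _ ht0.le htk.le).symm)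
  · exact isLocalMin_of_isUnit_det_left hmin (hmin.isUnit_det_left_of_lt hconv (hdiff _) hlt)
      (hcont 0 t).continuousAt hprod
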